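/- arXiv:1905.10590 — 2 statements merged into one kernel-verified Lean document; each statement's English description precedes it below -/
import Mathlib

section
/- For t < u, the random variables C_t and C_u on the uniform space {H,T}^m are uncorrelated: E[C_t C_u] = E[C_t]·E[C_u]. -/
/-!
Write `C_t = X_{t-1} · [flip t is T]`. On the event that flip `t` is tails, `X_{u-1}` is also the
number of heads among the first `u - 1` flips other than flip `t`. So `C_t C_u` is the product of
the head counts `H_A`, `H_B` over `A` = the first `t - 1` flips and `B` = the first `u - 1` flips
without flip `t`, times the tails indicators of flips `t` and `u`, which do not interact with `A`
or `B`. Hence `E[C_t C_u] = E[H_A H_B] / 4 = (|A| |B| + |A ∩ B|) / 16 = (t - 1)(u - 1) / 16`,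
while `E[C_t] = (t - 1) / 4` and `E[C_u] = (u - 1) / 4`.
-/

open Finset

/-- Number of heads among the first `t` flips of `ω ∈ {H,T}^m` (heads = `true`). -/
def X (m t : ℕ) (ω : Fin m → Bool) : ℕ :=
  (Finset.univ.filter (fun i : Fin m => (i : ℕ) < t ∧ ω i = true)).card

/-- `C t = X (t-1)` if flip `t` (1-indexed) is tails, and `0` otherwise. -/
def C (m t : ℕ) (ω : Fin m → Bool) : ℕ :=
  if h : t - 1 < m then (if ω ⟨t - 1, h⟩ = false then X m (t - 1) ω else 0) else 0

/-- Number of tails. -/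
def Y (m : ℕ) (ω : Fin m → Bool) : ℕ := m - X m m ω

/-- Size of the random partition: `N = Y + ∑_{t=1}^m C_t`. -/
def N (m : ℕ) (ω : Fin m → Bool) : ℕ := Y m ω + ∑ t ∈ Finset.Icc 1 m, C m t ω

/-- Expectation with respect to the uniform distribution on `{H,T}^m`. -/
noncomputable def expec (m : ℕ) (f : (Fin m → Bool) → ℝ) : ℝ :=
  (∑ ω : Fin m → Bool, f ω) / 2 ^ m

/-- Variance with respect to the uniform distribution on `{H,T}^m`. -/
noncomputable def variance (m : ℕ) (f : (Fin m → Bool) → ℝ) : ℝ :=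
  expec m (fun ω => (f ω - expec m f) ^ 2)

section CoinFlips

variable {m : ℕ}

theorem expec_sum {ι : Type*} (s : Finset ι) (f : ι → (Fin m → Bool) → ℝ) :
    expec m (fun ω => ∑ i ∈ s, f i ω) = ∑ i ∈ s, expec m (f i) := by
  simp only [expec, ← sum_div]
  rw [sum_comm]

theorem expec_const (c : ℝ) : expec m (fun _ => c) = c := by
  simp [expec]

theorem expec_mul_indicator_of_update_eq {f : (Fin m → Bool) → ℝ} {k : Fin m}
    (hf : ∀ ω c, f (Function.update ω k c) = f ω) (b : Bool) :
    expec m (fun ω => f ω * if ω k = b then 1 else 0) = expec m f / 2 := by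
  have hflip : Function.Involutive fun ω : Fin m → Bool => Function.update ω k (!ω k) := by
    intro ω; simp
  -- flipping coordinate `k` fixes `f` and swaps the events `ω k = b` and `ω k = !b`
  have hswap : ∑ ω, f ω * (if ω k = b then 1 else 0) =
      ∑ ω, f ω * (if ω k = !b then 1 else 0) := by
    rw [← Equiv.sum_comp (hflip.toPerm _)]
    refine sum_congr rfl fun ω _ => ?_
    simp only [Function.Involutive.coe_toPerm, Function.update_self, hf]
    cases b <;> cases ω k <;> simp
  have hsplit : ∑ ω, f ω = ∑ ω, f ω * (if ω k = b then 1 else 0) +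
      ∑ ω, f ω * (if ω k = !b then 1 else 0) := by
    rw [← sum_add_distrib]
    refine sum_congr rfl fun ω _ => ?_
    cases b <;> cases ω k <;> simp
  simp only [expec]
  rw [hsplit, ← hswap]
  ring

theorem expec_indicator (k : Fin m) (b : Bool) :
    expec m (fun ω => if ω k = b then (1 : ℝ) else 0) = 1 / 2 := by
  simpa [expec_const] using
    expec_mul_indicator_of_update_eq (f := fun _ => (1 : ℝ)) (k := k) (fun _ _ => rfl) b

theorem expec_indicator_mul_indicator (i j : Fin m) :
    expec m (fun ω => (if ω i = true then (1 : ℝ) else 0) * if ω j = true then 1 else 0) =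
      (1 + if i = j then 1 else 0) / 4 := by
  obtain rfl | hij := eq_or_ne i j
  · have hsq : ∀ ω : Fin m → Bool, ((if ω i = true then (1 : ℝ) else 0) *
        if ω i = true then 1 else 0) = if ω i = true then 1 else 0 := by
      intro ω; split_ifs <;> norm_num
    simp only [hsq, expec_indicator, if_pos]
    norm_num
  · rw [expec_mul_indicator_of_update_eq (fun ω c => by simp [Function.update_of_ne hij]),
      expec_indicator, if_neg hij]
    norm_num

def heads (s : Finset (Fin m)) (ω : Fin m → Bool) : ℕ := #{i ∈ s | ω i = true}

theorem heads_cast (s : Finset (Fin m)) (ω : Fin m → Bool) :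
    (heads s ω : ℝ) = ∑ i ∈ s, if ω i = true then 1 else 0 := by
  rw [heads, natCast_card_filter]

theorem heads_update_of_notMem {s : Finset (Fin m)} {k : Fin m} (hk : k ∉ s)
    (ω : Fin m → Bool) (c : Bool) : heads s (Function.update ω k c) = heads s ω := by
  unfold heads
  congr 1
  refine filter_congr fun i hi => ?_
  rw [Function.update_of_ne (ne_of_mem_of_not_mem hi hk)]

theorem heads_erase_of_eq_false {ω : Fin m → Bool} {k : Fin m} (hk : ω k = false)
    (s : Finset (Fin m)) : heads (s.erase k) ω = heads s ω := by
  unfold heads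
  rw [filter_erase, erase_eq_of_notMem (by simp [hk])]

theorem expec_heads (s : Finset (Fin m)) : expec m (fun ω => (heads s ω : ℝ)) = #s / 2 := by
  simp only [heads_cast, expec_sum, expec_indicator, sum_const, nsmul_eq_mul]
  ring

theorem expec_heads_mul_heads (s t : Finset (Fin m)) :
    expec m (fun ω => (heads s ω : ℝ) * heads t ω) = (#s * #t + #(s ∩ t)) / 4 := by
  simp only [heads_cast, sum_mul_sum, expec_sum, expec_indicator_mul_indicator, ← sum_div,
    sum_add_distrib, sum_const, sum_ite_eq, nsmul_eq_mul, mul_one]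
  rw [← natCast_card_filter, filter_mem_eq_inter]

theorem X_eq_heads (t : ℕ) (ω : Fin m → Bool) : X m t ω = heads {i | (i : ℕ) < t} ω := by
  simp only [X, heads, filter_filter]

theorem C_eq_heads_mul_indicator {t : ℕ} (ht : t - 1 < m) (ω : Fin m → Bool) :
    (C m t ω : ℝ) =
      heads {i | (i : ℕ) < t - 1} ω * if ω ⟨t - 1, ht⟩ = false then 1 else 0 := by
  rw [C, dif_pos ht, X_eq_heads]
  split_ifs <;> simp

theorem expec_C {t : ℕ} (ht : t - 1 < m) :
    expec m (fun ω => (C m t ω : ℝ)) = (t - 1 : ℕ) / 4 := by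
  simp only [C_eq_heads_mul_indicator ht]
  rw [expec_mul_indicator_of_update_eq
      (fun ω c => by rw [heads_update_of_notMem (by simp)]),
    expec_heads, Fin.card_filter_val_lt, min_eq_right ht.le]
  ring

theorem expec_C_mul_C {t u : ℕ} (ht : 1 ≤ t) (htu : t < u) (hu : u ≤ m) :
    expec m (fun ω => (C m t ω : ℝ) * C m u ω) = (t - 1 : ℕ) * (u - 1 : ℕ) / 16 := by
  have hkt : t - 1 < m := by omega
  have hku : u - 1 < m := by omega
  set kt : Fin m := ⟨t - 1, hkt⟩
  set ku : Fin m := ⟨u - 1, hku⟩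
  set A : Finset (Fin m) := {i | (i : ℕ) < t - 1}
  set B : Finset (Fin m) := ({i | (i : ℕ) < u - 1} : Finset (Fin m)).erase kt
  have hkt_ku : kt ≠ ku := by simp only [kt, ku, ne_eq, Fin.ext_iff]; omega
  have hprod : ∀ ω, (C m t ω : ℝ) * C m u ω = heads A ω * heads B ω *
      (if ω kt = false then 1 else 0) * (if ω ku = false then 1 else 0) := by
    intro ω
    rw [C_eq_heads_mul_indicator hkt, C_eq_heads_mul_indicator hku]
    by_cases hω : ω kt = false
    · rw [heads_erase_of_eq_false hω]
      simp only [kt, A, hω]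
      ring
    · simp [kt, hω]
  have hkuA : ku ∉ A := by simp only [A, ku, mem_filter, mem_univ, true_and, not_lt]; omega
  have hkuB : ku ∉ B := by simp [B, ku]
  have hktA : kt ∉ A := by simp [A, kt]
  have hktB : kt ∉ B := by simp [B]
  have hAB : A ∩ B = A := by
    refine inter_eq_left.mpr fun i hi => ?_
    simp only [A, B, kt, mem_filter, mem_univ, true_and, mem_erase, ne_eq, Fin.ext_iff] at hi ⊢
    omega
  have hcardB : (#B : ℝ) = (u - 1 : ℕ) - 1 := by
    rw [card_erase_of_mem (by simp only [kt, mem_filter, mem_univ, true_and]; omega),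
      Fin.card_filter_val_lt, min_eq_right hku.le, Nat.cast_sub (by omega), Nat.cast_one]
  simp only [hprod]
  rw [expec_mul_indicator_of_update_eq (fun ω c => by
      simp only [heads_update_of_notMem hkuA, heads_update_of_notMem hkuB,
        Function.update_of_ne hkt_ku]),
    expec_mul_indicator_of_update_eq (fun ω c => by
      simp only [heads_update_of_notMem hktA, heads_update_of_notMem hktB]),
    expec_heads_mul_heads, hAB, hcardB, Fin.card_filter_val_lt, min_eq_right hkt.le]
  ring

end CoinFlips

/-- For `t < u`, `C_t` and `C_u` are uncorrelated. -/
theorem C_C_uncorrelated (m t u : ℕ) (h1 : 1 ≤ t) (htu : t < u) (h2 : u ≤ m) :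
    expec m (fun ω => (C m t ω : ℝ) * (C m u ω : ℝ)) =
      expec m (fun ω => (C m t ω : ℝ)) * expec m (fun ω => (C m u ω : ℝ)) := by
  rw [expec_C_mul_C h1 htu h2, expec_C (by omega), expec_C (by omega)]
  ring
end

section
/- For every ε > 0 there exists N such that for all n ≥ N, log p(n) > (√8·log 2)·√n/(1+ε). -/
/-!
Cutting `n` at `k` of the `n - 1` interior points gives `(n - 1).choose k` compositions of
`n` into `k + 1` parts, and at most `(k + 1)!` of them rearrange to the same partition, so
`(n - 1).choose k ≤ (k + 1)! * p n`. For `k = ⌊√n⌋` Stirling's upper bound on the factorials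
turns this into `log p(n) ≥ 2√n - O(log n)`, and `√8 · log 2 ≈ 1.96 < 2`.
-/

open Finset Real Filter
open scoped Nat

/-- The partition function: the number of partitions of `n`. -/
def p (n : ℕ) : ℕ := Fintype.card (Nat.Partition n)

theorem CompositionAsSet.length_compositionAsSetEquiv_symm {n : ℕ} (hn : n ≠ 0)
    (s : Finset (Fin (n - 1))) : ((compositionAsSetEquiv n).symm s).length = #s + 1 := by
  let shift : Fin (n - 1) ↪ Fin (n + 1) := (Fin.castLEEmb (by omega)).trans (Fin.succEmb n)
  have hboundaries : ((compositionAsSetEquiv n).symm s).boundaries =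
      {0, Fin.last n} ∪ s.map shift := by
    ext i
    simp only [compositionAsSetEquiv, Set.toFinset_ofPred, exists_prop, Equiv.symm_mk,
      Equiv.coe_fn_mk, mem_filter, mem_univ, true_and, insert_union, singleton_union, mem_insert,
      Finset.mem_map, Function.Embedding.trans_apply, Fin.castLEEmb_apply, Fin.coe_succEmb, shift]
    grind [Fin.ext_iff]
  have hdisj : Disjoint ({0, Fin.last n} : Finset (Fin (n + 1))) (s.map shift) := by
    simp only [disjoint_left, mem_insert, mem_singleton, Finset.mem_map,
      Function.Embedding.trans_apply, Fin.castLEEmb_apply, Fin.coe_succEmb, not_exists, not_and,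
      forall_eq_or_imp, Fin.succ_ne_zero, not_false_eq_true, implies_true, forall_eq, true_and,
      shift]
    grind [Fin.ext_iff]
  rw [CompositionAsSet.length, hboundaries, card_union_of_disjoint hdisj,
    card_pair (by simp [Fin.ext_iff]; omega), card_map]
  omega

theorem Composition.card_filter_length_eq_succ {n : ℕ} (hn : n ≠ 0) (k : ℕ) :
    #{c : Composition n | c.length = k + 1} = (n - 1).choose k := by
  let e := ((compositionEquiv n).trans (compositionAsSetEquiv n)).symm
  have he (s : Finset (Fin (n - 1))) : (e s).length = #s + 1 := by
    simp only [e, Equiv.symm_trans_apply]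
    exact (CompositionAsSet.toComposition_length _).trans
      (CompositionAsSet.length_compositionAsSetEquiv_symm hn s)
  rw [← card_equiv e (s := powersetCard k univ) (fun s => by simp [he]), card_powersetCard,
    card_univ, Fintype.card_fin]

theorem Nat.Partition.card_filter_ofComposition_eq_le {n : ℕ} (q : Nat.Partition n) :
    #{c : Composition n | Nat.Partition.ofComposition n c = q} ≤ (Multiset.card q.parts)! := by
  calc #{c : Composition n | Nat.Partition.ofComposition n c = q}
      ≤ #q.parts.toList.permutations.toFinset := by
        refine card_le_card_of_injOn Composition.blocks (fun c hc => ?_)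
          (fun c _ c' _ h => Composition.ext h)
        have hc : (c.blocks : Multiset ℕ) = q.parts := by
          simpa using congrArg Nat.Partition.parts (mem_filter.1 hc).2
        rw [← Multiset.coe_toList q.parts, Multiset.coe_eq_coe] at hc
        simpa using hc
    _ ≤ q.parts.toList.permutations.length := List.toFinset_card_le _
    _ = (Multiset.card q.parts)! := by rw [List.length_permutations, Multiset.length_toList]

theorem choose_le_factorial_mul_p {n : ℕ} (hn : n ≠ 0) (k : ℕ) :
    (n - 1).choose k ≤ (k + 1)! * p n := by
  classical
  rw [← Composition.card_filter_length_eq_succ hn]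
  refine (card_le_mul_card_image (f := Nat.Partition.ofComposition n) _ _ fun q hq => ?_).trans
    (Nat.mul_le_mul_left _ (card_le_univ _))
  obtain ⟨c, hc, rfl⟩ := mem_image.1 hq
  have hlen : Multiset.card (Nat.Partition.ofComposition n c).parts = k + 1 := by
    simpa using (mem_filter.1 hc).2
  calc _ ≤ #{c' : Composition n | Nat.Partition.ofComposition n c' = .ofComposition n c} :=
        card_le_card (filter_subset_filter _ (filter_subset _ _))
    _ ≤ (k + 1)! := hlen ▸ Nat.Partition.card_filter_ofComposition_eq_le _

theorem Real.log_factorial_le (n : ℕ) : log n ! ≤ n * log n - n + log n / 2 + 1 := by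
  rcases Nat.eq_zero_or_pos n with rfl | hn
  · simp
  have hstirling : Stirling.stirlingSeq n ≤ exp 1 / √2 := by
    rw [← Stirling.stirlingSeq_one, ← Nat.sub_add_cancel hn]
    exact Stirling.stirlingSeq'_antitone (Nat.zero_le (n - 1))
  have hpos : (0 : ℝ) < √(2 * n) * (n / exp 1) ^ n := by positivity
  have hfact : (n ! : ℝ) ≤ exp 1 * √n * (n / exp 1) ^ n := by
    rw [Stirling.stirlingSeq, div_le_iff₀ hpos] at hstirling
    calc (n ! : ℝ) ≤ exp 1 / √2 * (√(2 * n) * (n / exp 1) ^ n) := hstirling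
      _ = exp 1 * √n * (n / exp 1) ^ n := by
        rw [sqrt_mul zero_le_two]
        field_simp
  calc log n ! ≤ log (exp 1 * √n * (n / exp 1) ^ n) := log_le_log (by positivity) hfact
    _ = n * log n - n + log n / 2 + 1 := by
      have : (n : ℝ) ≠ 0 := by positivity
      rw [log_mul (by positivity) (by positivity), log_mul (by positivity) (by positivity),
        log_pow, log_div this (exp_pos 1).ne', log_exp, log_sqrt (Nat.cast_nonneg n)]
      ring

theorem pow_sub_le_factorial_mul_p {n : ℕ} (hn : n ≠ 0) (k : ℕ) :
    (n - k) ^ k ≤ k ! * ((k + 1)! * p n) :=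
  calc (n - k) ^ k = (n - 1 + 1 - k) ^ k := by
        rw [Nat.sub_add_cancel (Nat.one_le_iff_ne_zero.2 hn)]
    _ ≤ (n - 1).descFactorial k := Nat.pow_sub_le_descFactorial _ _
    _ = k ! * (n - 1).choose k := Nat.descFactorial_eq_factorial_mul_choose _ _
    _ ≤ k ! * ((k + 1)! * p n) := Nat.mul_le_mul_left _ (choose_le_factorial_mul_p hn k)

theorem two_mul_sub_le_log_p {n k : ℕ} (hk : 2 ≤ k) (hkn : k * k ≤ n) :
    2 * k - 4 - 2 * log (k + 1) ≤ log (p n) := by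
  have hk2 : (2 : ℝ) ≤ k := by exact_mod_cast hk
  have hk0 : (0 : ℝ) < k - 1 := by linarith
  have hppos : 0 < p n := Fintype.card_pos
  have hgap : (k : ℝ) * (k - 1) ≤ (n - k : ℕ) := by
    have : ((k * k : ℕ) : ℝ) ≤ n := by exact_mod_cast hkn
    rw [Nat.cast_sub (by nlinarith)]
    push_cast at this
    linarith
  have hcount : ((k : ℝ) * (k - 1)) ^ k ≤ k ! * ((k + 1) * k ! * p n) :=
    calc _ ≤ ((n - k : ℕ) : ℝ) ^ k := pow_le_pow_left₀ (by positivity) hgap k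
      _ ≤ _ := by
        have := pow_sub_le_factorial_mul_p (by nlinarith : n ≠ 0) k
        rw [Nat.factorial_succ] at this
        exact_mod_cast this
  have hlog : k * (log k + log (k - 1)) ≤ 2 * log k ! + log (k + 1) + log (p n) := by
    have := log_le_log (by positivity) hcount
    rw [mul_pow, log_mul (by positivity) (by positivity), log_pow, log_pow,
      log_mul (by positivity) (by positivity), log_mul (by positivity) (by positivity),
      log_mul (by positivity) (by positivity)] at this
    linarith
  have hratio : k * (log k - log (k - 1)) ≤ 2 := by
    have h := log_le_sub_one_of_pos (x := k / (k - 1)) (by positivity)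
    rw [log_div (by positivity) hk0.ne'] at h
    calc k * (log k - log (k - 1)) ≤ k * (k / (k - 1) - 1) :=
          mul_le_mul_of_nonneg_left h (Nat.cast_nonneg k)
      _ = 1 + 1 / (k - 1) := by field_simp; ring
      _ ≤ 2 := by
        have : 1 / ((k : ℝ) - 1) ≤ 1 := by rw [div_le_one hk0]; linarith
        linarith
  have hmono : log k ≤ log (k + 1) := log_le_log (by positivity) (by linarith)
  linarith [log_factorial_le k]

theorem Nat.tendsto_sqrt_atTop : Tendsto Nat.sqrt atTop atTop :=
  tendsto_atTop_atTop.2 fun b => ⟨b * b, fun _ h => Nat.le_sqrt.2 h⟩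

theorem eventually_mul_sqrt_lt_log_p {c : ℝ} (hc : c < 2) :
    ∀ᶠ n : ℕ in atTop, c * √n < log (p n) := by
  set d := max c 0
  have hd : d < 2 := max_lt hc two_pos
  have hlog : ∀ᶠ k : ℕ in atTop, log (k + 1) ≤ (2 - d) / 4 * (k + 1) := by
    have hshift : Tendsto (fun k : ℕ => (k : ℝ) + 1) atTop atTop :=
      tendsto_atTop_add_const_right _ 1 tendsto_natCast_atTop_atTop
    filter_upwards [hshift.eventually
      (isLittleO_log_id_atTop.bound (c := (2 - d) / 4) (by linarith))] with k hk
    simpa [abs_of_pos (by positivity : (0 : ℝ) < k + 1)] using (le_abs_self _).trans hk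
  have hlarge : ∀ᶠ k : ℕ in atTop, 2 ≤ k ∧ d * (k + 1) < 2 * k - 4 - 2 * log (k + 1) := by
    filter_upwards [hlog, eventually_ge_atTop 2,
      tendsto_natCast_atTop_atTop.eventually_gt_atTop ((10 + d) / (2 - d))] with k hk hk2 hkd
    rw [div_lt_iff₀ (by linarith)] at hkd
    exact ⟨hk2, by linarith⟩
  filter_upwards [Nat.tendsto_sqrt_atTop.eventually hlarge] with n ⟨hk2, hk⟩
  calc c * √n ≤ d * (Nat.sqrt n + 1) :=
        mul_le_mul (le_max_left c 0) real_sqrt_le_nat_sqrt_succ (sqrt_nonneg _) (le_max_right c 0)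
    _ < _ := hk
    _ ≤ log (p n) := two_mul_sub_le_log_p hk2 (Nat.sqrt_le n)

theorem sqrt_eight_mul_log_two_lt_two : √8 * log 2 < 2 := by
  have h8 : √8 < 2.83 := by
    rw [sqrt_lt' (by norm_num)]; norm_num
  nlinarith [log_two_lt_d9, log_pos one_lt_two, sqrt_nonneg 8]

/-- For every `ε > 0`, `log p(n) > √8·(log 2)·√n/(1+ε)` for all sufficiently
large `n`. -/
theorem log_p_lower (ε : ℝ) (hε : 0 < ε) :
    ∃ N : ℕ, ∀ n : ℕ, N ≤ n →
      Real.sqrt 8 * Real.log 2 * Real.sqrt n / (1 + ε) < Real.log (p n) := by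
  have hc : √8 * log 2 / (1 + ε) < 2 :=
    (div_le_self (by positivity) (by linarith)).trans_lt sqrt_eight_mul_log_two_lt_two
  obtain ⟨N, hN⟩ := eventually_atTop.1 (eventually_mul_sqrt_lt_log_p hc)
  exact ⟨N, fun n hn => by simpa only [div_mul_eq_mul_div] using hN n hn⟩
end
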